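/- arXiv:2401.13842 — 6 statements merged into one kernel-verified Lean document; each statement's English description precedes it below -/
import Mathlib

section
/- Under the ATT(γ) marginals, for every i ∈ I and t one has E[SF_{i,t}] = β_{i,t}, and for every f ∈ F and t one has E[χ_{f,t}] = γ · x_{f,t} · p_{f,t}. Consequently, for any profits w_{f,t} ≥ 0, the expected total profit satisfies E[∑_{t=1}^T ∑_{f∈F} w_{f,t} χ_{f,t}] = γ · ∑_{t=1}^T ∑_{f∈F} w_{f,t} x_{f,t} p_{f,t}; in particular, ATT(γ) with γ ∈ [0,1/2] attains a γ fraction of the LP objective value, and hence a competitive ratio of at least γ for MP-KHD (Theorem: competitive analysis of ATT(γ)). -/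
/-!
The safety event of agent `i` at round `t` is the intersection of the round events "no assignment
of `i` succeeds in round `s`", `s < t`, which are independent. Since at most one assignment
succeeds per round, round `s` is quiet for `i` with probability
`1 - γ ∑_{f ∈ F_i} x p / β_{i,s} = β_{i,s+1} / β_{i,s}`, so the product telescopes to `β_{i,t}`.
Round `t` is independent of the earlier ones, hence `E[χ_{f,t}] = P(W_{f,t} = 1) β_{ι f,t} = γ x p`,
and the total profit follows by linearity.
-/

open MeasureTheory ProbabilityTheory Finset

@[to_additive]
theorem Fin.prod_Iio_val_eq_prod_range {M : Type*} [CommMonoid M] {T : ℕ} (t : Fin T)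
    (g : ℕ → M) : ∏ s ∈ Iio t, g s = ∏ n ∈ range t, g n := by
  rw [← Nat.Iio_eq_range, ← Fin.map_valEmbedding_Iio, prod_map]
  rfl

theorem Fin.prod_Iio_one_sub_div_one_sub_sum {T : ℕ} (c : Fin T → ℝ)
    (hc : ∀ s, 1 - ∑ r ∈ Iio s, c r ≠ 0) (t : Fin T) :
    ∏ s ∈ Iio t, (1 - c s / (1 - ∑ r ∈ Iio s, c r)) = 1 - ∑ s ∈ Iio t, c s := by
  set c' : ℕ → ℝ := Function.extend Fin.val c 0
  have hc' : ∀ s : Fin T, c' s = c s := Fin.val_injective.extend_apply c 0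
  have hpartial : ∀ s : Fin T, ∑ r ∈ Iio s, c r = ∑ n ∈ range s, c' n := fun s => by
    simp_rw [← hc']
    exact Fin.sum_Iio_val_eq_sum_range s c'
  simp_rw [hpartial, ← hc']
  rw [Fin.prod_Iio_val_eq_prod_range t (fun n => 1 - c' n / (1 - ∑ r ∈ range n, c' r))]
  refine prod_range_induction _ (fun n => 1 - ∑ r ∈ range n, c' r) (by simp) _ fun k hk => ?_
  have hk' : 1 - ∑ r ∈ range k, c' r ≠ 0 := by
    simpa [hpartial] using hc ⟨k, hk.trans t.isLt⟩
  rw [sum_range_succ]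
  field_simp
  ring

theorem ite_forall_eq_zero_eq_one_sub_sum {F : Type*} (S : Finset F) {a : F → ℝ}
    (ha : ∀ f, a f = 0 ∨ a f = 1) (hS : ∑ f ∈ S, a f ≤ 1) :
    (if ∀ f ∈ S, a f = 0 then (1 : ℝ) else 0) = 1 - ∑ f ∈ S, a f := by
  split_ifs with h
  · rw [sum_eq_zero h, sub_zero]
  · push Not at h
    obtain ⟨f, hf, hf0⟩ := h
    have hle : a f ≤ ∑ g ∈ S, a g :=
      single_le_sum (fun g _ => by rcases ha g with h | h <;> simp [h]) hf
    linarith [(ha f).resolve_left hf0]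

theorem Set.indicator_one_setOf_eq_one {Ω : Type*} {g : Ω → ℝ} (h : ∀ ω, g ω = 0 ∨ g ω = 1) :
    {ω | g ω = 1}.indicator 1 = g := by
  funext ω
  rcases h ω with h | h <;> simp [h]

section

variable {Ω F : Type*} [MeasurableSpace Ω] {μ : Measure Ω}

theorem integral_eq_measureReal_of_eq_zero_or_one {g : Ω → ℝ} (h : ∀ ω, g ω = 0 ∨ g ω = 1)
    (hg : Measurable g) : ∫ ω, g ω ∂μ = μ.real {ω | g ω = 1} := by
  conv_lhs => rw [← Set.indicator_one_setOf_eq_one h]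
  exact integral_indicator_one (hg (measurableSet_singleton 1))

theorem integrable_of_eq_zero_or_one [IsFiniteMeasure μ] {g : Ω → ℝ}
    (h : ∀ ω, g ω = 0 ∨ g ω = 1) (hg : Measurable g) : Integrable g μ := by
  rw [← Set.indicator_one_setOf_eq_one h]
  exact (integrable_const 1).indicator (hg (measurableSet_singleton 1))

theorem measureReal_forall_eq_zero_of_sum_le_one [IsProbabilityMeasure μ] (S : Finset F)
    {g : F → Ω → ℝ} (h01 : ∀ f ω, g f ω = 0 ∨ g f ω = 1) (hg : ∀ f, Measurable (g f))
    (hS : ∀ᵐ ω ∂μ, ∑ f ∈ S, g f ω ≤ 1) :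
    μ.real {ω | ∀ f ∈ S, g f ω = 0} = 1 - ∑ f ∈ S, μ.real {ω | g f ω = 1} := by
  have hmeas : MeasurableSet {ω | ∀ f ∈ S, g f ω = 0} := by
    simp only [Set.ofPred_forall]
    exact S.measurableSet_biInter fun f _ => hg f (measurableSet_singleton 0)
  have hint : ∀ f ∈ S, Integrable (g f) μ := fun f _ =>
    integrable_of_eq_zero_or_one (h01 f) (hg f)
  calc μ.real {ω | ∀ f ∈ S, g f ω = 0}
      = ∫ ω, {ω | ∀ f ∈ S, g f ω = 0}.indicator 1 ω ∂μ :=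
        (integral_indicator_one hmeas).symm
    _ = ∫ ω, 1 - ∑ f ∈ S, g f ω ∂μ := integral_congr_ae <| hS.mono fun ω hω => by
        simpa [Set.indicator_apply] using ite_forall_eq_zero_eq_one_sub_sum S (h01 · ω) hω
    _ = 1 - ∑ f ∈ S, ∫ ω, g f ω ∂μ := by
        rw [integral_sub (integrable_const 1) (integrable_finsetSum S hint),
          integral_finsetSum S hint, integral_const, probReal_univ, one_smul]
    _ = 1 - ∑ f ∈ S, μ.real {ω | g f ω = 1} := by
        simp_rw [integral_eq_measureReal_of_eq_zero_or_one (h01 _) (hg _)]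

end

theorem ProbabilityTheory.iIndepFun.measure_preimage_inter_biInter {Ω ι : Type*}
    [MeasurableSpace Ω] {μ : Measure Ω} [DecidableEq ι] {β : ι → Type*}
    {m : ∀ i, MeasurableSpace (β i)} {f : ∀ i, Ω → β i} (h : iIndepFun f μ) {S : Finset ι}
    {j : ι} (hj : j ∉ S) {A : Set (β j)} {B : ∀ i, Set (β i)} (hA : MeasurableSet A)
    (hB : ∀ i ∈ S, MeasurableSet (B i)) :
    μ (f j ⁻¹' A ∩ ⋂ i ∈ S, f i ⁻¹' B i) = μ (f j ⁻¹' A) * μ (⋂ i ∈ S, f i ⁻¹' B i) := by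
  have hupd : ∀ i ∈ S, Function.update B j A i = B i := fun i hi =>
    Function.update_of_ne (ne_of_mem_of_not_mem hi hj) A B
  have hins := h.measure_inter_preimage_eq_mul (insert j S) (sets := Function.update B j A)
    fun i hi => by
      rcases mem_insert.mp hi with rfl | hi
      · simpa using hA
      · simpa [hupd i hi] using hB i hi
  rw [set_biInter_insert, prod_insert hj, Function.update_self,
    Set.iInter₂_congr fun i hi => congrArg (f i ⁻¹' ·) (hupd i hi),
    prod_congr rfl fun i hi => congrArg (μ <| f i ⁻¹' ·) (hupd i hi)] at hins
  rw [hins, h.measure_inter_preimage_eq_mul S hB]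

theorem one_sub_mul_sum_pos {ι : Type*} [Fintype ι] {γ : ℝ} (hγ0 : 0 ≤ γ) (hγ1 : γ < 1)
    {a : ι → ℝ} (ha : ∀ s, 0 ≤ a s) (hsum : ∑ s, a s ≤ 1) (S : Finset ι) :
    0 < 1 - γ * ∑ s ∈ S, a s := by
  have hS : ∑ s ∈ S, a s ≤ 1 := (sum_le_univ_sum_of_nonneg ha).trans hsum
  nlinarith [sum_nonneg fun s (_ : s ∈ S) => ha s]

section RoundProcess

variable {Ω F I : Type*} [MeasurableSpace Ω] {μ : Measure Ω} {ι : F → I} {T : ℕ}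
  {W : Fin T → F → Ω → ℝ}

def quietRound (ι : F → I) (w : F → Ω → ℝ) (i : I) : Set Ω :=
  {ω | ∀ f, ι f = i → w f ω = 0}

def safeEvent (ι : F → I) (W : Fin T → F → Ω → ℝ) (i : I) (t : Fin T) : Set Ω :=
  ⋂ s ∈ Iio t, quietRound ι (W s) i

theorem measurableSet_setOf_forall_fiber_eq_zero [Countable F] (i : I) :
    MeasurableSet {v : F → ℝ | ∀ f, ι f = i → v f = 0} := by
  measurability

theorem measureReal_safeEvent [Countable F] (hindep : iIndepFun (fun t ω f => W t f ω) μ)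
    (i : I) (t : Fin T) :
    μ.real (safeEvent ι W i t) = ∏ s ∈ Iio t, μ.real (quietRound ι (W s) i) := by
  simp only [measureReal_def, ← ENNReal.toReal_prod]
  exact congrArg ENNReal.toReal <| hindep.measure_inter_preimage_eq_mul (Iio t)
    (sets := fun _ => {v | ∀ f, ι f = i → v f = 0})
    fun _ _ => measurableSet_setOf_forall_fiber_eq_zero i

theorem measureReal_inter_safeEvent [Countable F] (hindep : iIndepFun (fun t ω f => W t f ω) μ)
    (i : I) (t : Fin T) (f : F) :
    μ.real ({ω | W t f ω = 1} ∩ safeEvent ι W i t) =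
      μ.real {ω | W t f ω = 1} * μ.real (safeEvent ι W i t) := by
  simp only [measureReal_def, safeEvent, ← ENNReal.toReal_mul]
  exact congrArg ENNReal.toReal <|
    hindep.measure_preimage_inter_biInter (A := {v | v f = 1}) notMem_Iio_self
      ((measurableSet_singleton (1 : ℝ)).preimage (measurable_pi_apply f))
      fun s _ => measurableSet_setOf_forall_fiber_eq_zero i

theorem measurableSet_safeEvent [Countable F] (hW : ∀ t f, Measurable (W t f)) (i : I)
    (t : Fin T) :
    MeasurableSet (safeEvent ι W i t) :=
  (Iio t).measurableSet_biInter fun s _ =>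
    measurable_pi_lambda _ (hW s) (measurableSet_setOf_forall_fiber_eq_zero i)

variable [Fintype F]

theorem measureReal_quietRound [IsProbabilityMeasure μ] [DecidableEq I] {w : F → Ω → ℝ}
    (h01 : ∀ f ω, w f ω = 0 ∨ w f ω = 1) (hw : ∀ f, Measurable (w f))
    (hle : ∀ᵐ ω ∂μ, ∑ f, w f ω ≤ 1) (i : I) :
    μ.real (quietRound ι w i) =
      1 - ∑ f ∈ univ.filter (fun f => ι f = i), μ.real {ω | w f ω = 1} := by
  have hquiet : quietRound ι w i = {ω | ∀ f ∈ univ.filter (fun f => ι f = i), w f ω = 0} := by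
    ext ω
    simp [quietRound]
  rw [hquiet]
  refine measureReal_forall_eq_zero_of_sum_le_one _ h01 hw (hle.mono fun ω hω => ?_)
  exact (sum_le_univ_sum_of_nonneg fun f => by rcases h01 f ω with h | h <;> simp [h]).trans hω

theorem measureReal_safeEvent_eq [IsProbabilityMeasure μ] [DecidableEq I]
    (h01 : ∀ t f ω, W t f ω = 0 ∨ W t f ω = 1) (hW : ∀ t f, Measurable (W t f))
    (hindep : iIndepFun (fun t ω f => W t f ω) μ) (honce : ∀ᵐ ω ∂μ, ∀ t, ∑ f, W t f ω ≤ 1)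
    {γ : ℝ} {x p : F → Fin T → ℝ} {β : I → Fin T → ℝ}
    (hβ : ∀ i t, β i t =
      1 - γ * ∑ s ∈ Iio t, ∑ f ∈ univ.filter (fun f => ι f = i), x f s * p f s)
    (hβ0 : ∀ i t, β i t ≠ 0)
    (hmarg : ∀ t f, μ.real {ω | W t f ω = 1} = γ * x f t * p f t / β (ι f) t)
    (i : I) (t : Fin T) :
    μ.real (safeEvent ι W i t) = β i t := by
  set c : Fin T → ℝ := fun s => γ * ∑ f ∈ univ.filter (fun f => ι f = i), x f s * p f s
  have hβc : ∀ s, β i s = 1 - ∑ r ∈ Iio s, c r := fun s => by rw [hβ, mul_sum]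
  have hquiet : ∀ s, μ.real (quietRound ι (W s) i) = 1 - c s / (1 - ∑ r ∈ Iio s, c r) := by
    intro s
    rw [measureReal_quietRound (h01 s) (hW s) (honce.mono fun ω hω => hω s), ← hβc]
    simp only [c, mul_sum, sum_div]
    congr 1
    refine sum_congr rfl fun f hf => ?_
    rw [hmarg, (mem_filter.mp hf).2, mul_assoc]
  rw [measureReal_safeEvent hindep, prod_congr rfl fun s _ => hquiet s, hβc]
  exact Fin.prod_Iio_one_sub_div_one_sub_sum c (fun s => hβc s ▸ hβ0 i s) t

end RoundProcess

theorem integral_sum_sum_mul {Ω ι κ : Type*} [MeasurableSpace Ω] {μ : Measure Ω} [Fintype ι]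
    [Fintype κ] {g : κ → ι → Ω → ℝ} (hg : ∀ f t, Integrable (g f t) μ) (w : κ → ι → ℝ) :
    ∫ ω, ∑ t, ∑ f, w f t * g f t ω ∂μ = ∑ t, ∑ f, w f t * ∫ ω, g f t ω ∂μ := by
  rw [integral_finsetSum _ fun t _ => integrable_finsetSum _ fun f _ => (hg f t).const_mul _]
  refine sum_congr rfl fun t _ => ?_
  rw [integral_finsetSum _ fun f _ => (hg f t).const_mul _]
  simp_rw [integral_const_mul]

open scoped Classical in
theorem stmt_3_general {Ω : Type*} [MeasureSpace Ω] [IsProbabilityMeasure (ℙ : Measure Ω)]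
    {F I : Type*} [Fintype F] [DecidableEq I]
    (ι : F → I) (T : ℕ)
    (W : Fin T → F → Ω → ℝ)
    (hW01 : ∀ t f ω, W t f ω = 0 ∨ W t f ω = 1)
    (hWmeas : ∀ t f, Measurable (W t f))
    (hindep : iIndepFun
      (fun t ω => fun f => W t f ω) ℙ)
    (honce : ∀ᵐ ω ∂ℙ, ∀ t, ∑ f, W t f ω ≤ 1)
    (γ : ℝ) (hγ : γ ∈ Set.Icc (0 : ℝ) (1 / 2))
    (x p : F → Fin T → ℝ)
    (hx : ∀ f t, x f t ∈ Set.Icc (0 : ℝ) 1) (hp : ∀ f t, p f t ∈ Set.Icc (0 : ℝ) 1)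
    (hcap : ∀ i, ∑ t, ∑ f ∈ univ.filter (fun f => ι f = i), x f t * p f t ≤ 1)
    (β : I → Fin T → ℝ)
    (hβ : ∀ i t, β i t =
      1 - γ * ∑ s ∈ Finset.Iio t, ∑ f ∈ univ.filter (fun f => ι f = i), x f s * p f s)
    (hmarg : ∀ t f, ℙ {ω | W t f ω = 1} =
      ENNReal.ofReal (γ * x f t * p f t / β (ι f) t))
    (SF : I → Fin T → Ω → ℝ)
    (hSF : ∀ i t ω, SF i t ω =
      if ∀ s < t, ∀ f, ι f = i → W s f ω = 0 then 1 else 0)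
    (χ : F → Fin T → Ω → ℝ)
    (hχ : ∀ f t ω, χ f t ω = W t f ω * SF (ι f) t ω) :
    (∀ i t, (∫ ω, SF i t ω) = β i t) ∧
    (∀ f t, (∫ ω, χ f t ω) = γ * x f t * p f t) ∧
    (∀ w : F → Fin T → ℝ, (∀ f t, 0 ≤ w f t) →
      (∫ ω, ∑ t, ∑ f, w f t * χ f t ω) =
        γ * ∑ t, ∑ f, w f t * x f t * p f t) := by
  obtain ⟨hγ0, hγ1⟩ := hγ
  have hxp : ∀ f t, 0 ≤ x f t * p f t := fun f t => mul_nonneg (hx f t).1 (hp f t).1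
  have hβpos : ∀ i t, 0 < β i t := fun i t => hβ i t ▸
    one_sub_mul_sum_pos hγ0 (by linarith) (fun s => sum_nonneg fun f _ => hxp f s) (hcap i) _
  have hmarg' : ∀ t f, (ℙ : Measure Ω).real {ω | W t f ω = 1} = γ * x f t * p f t / β (ι f) t :=
      fun t f => by
    rw [measureReal_def, hmarg, ENNReal.toReal_ofReal]
    exact div_nonneg (mul_assoc γ _ _ ▸ mul_nonneg hγ0 (hxp f t)) (hβpos _ t).le
  have hsafe := measureReal_safeEvent_eq hW01 hWmeas hindep honce hβ
    (fun i t => (hβpos i t).ne') hmarg'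
  have hSF' : ∀ i t, SF i t = (safeEvent ι W i t).indicator 1 := fun i t => by
    funext ω
    simp [hSF, Set.indicator_apply, safeEvent, quietRound]
  have hχ' : ∀ f t, χ f t = ({ω | W t f ω = 1} ∩ safeEvent ι W (ι f) t).indicator 1 :=
    fun f t => by
      rw [Set.inter_indicator_one, Set.indicator_one_setOf_eq_one (hW01 t f), ← hSF']
      exact funext (hχ f t)
  have hmeasχ : ∀ f t, MeasurableSet ({ω | W t f ω = 1} ∩ safeEvent ι W (ι f) t) := fun f t =>
    (hWmeas t f (measurableSet_singleton 1)).inter (measurableSet_safeEvent hWmeas _ t)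
  have hEχ : ∀ f t, ∫ ω, χ f t ω = γ * x f t * p f t := fun f t => by
    rw [hχ', integral_indicator_one (hmeasχ f t), measureReal_inter_safeEvent hindep, hmarg',
      hsafe, div_mul_cancel₀ _ (hβpos _ t).ne']
  have hintχ : ∀ f t, Integrable (χ f t) := fun f t =>
    hχ' f t ▸ (integrable_const 1).indicator (hmeasχ f t)
  refine ⟨fun i t => ?_, hEχ, fun w _ => ?_⟩
  · rw [hSF', integral_indicator_one (measurableSet_safeEvent hWmeas i t), hsafe]
  · rw [integral_sum_sum_mul hintχ, mul_sum]
    simp_rw [hEχ, mul_sum]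
    exact sum_congr rfl fun t _ => sum_congr rfl fun f _ => by ring

open scoped Classical in
/-- competitive analysis of `ATT(γ)`: in the round-process model
(the round families `(W t f)_f` are mutually independent across `t`, and a.s.
at most one `W t f` is `1` per round), with safety indicators
`SF i t = 1` iff no `f` with `ι f = i` succeeded before round `t`, success
indicators `χ f t = W t f · SF (ι f) t`, and `ATT(γ)` marginals
`P(W t f = 1) = γ x f t p f t / β (ι f) t` where
`β i t = 1 - γ ∑_{s<t} ∑_{f:ι f=i} x f s p f s`, one has
`E[SF i t] = β i t` and `E[χ f t] = γ · x f t · p f t` for all `i, f, t`.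
Consequently, for any nonnegative profits `w`, the expected total profit equals
`γ · ∑_{t,f} w f t x f t p f t`; in particular `ATT(γ)` with `γ ∈ [0,1/2]`
attains a `γ` fraction of the LP objective value, hence a competitive ratio of
at least `γ` for MP-KHD. -/
theorem stmt_3 {Ω : Type*} [MeasureSpace Ω] [IsProbabilityMeasure (ℙ : Measure Ω)]
    {F I : Type*} [Fintype F] [Fintype I] [DecidableEq I]
    (ι : F → I) (T : ℕ)
    (W : Fin T → F → Ω → ℝ)
    (hW01 : ∀ t f ω, W t f ω = 0 ∨ W t f ω = 1)
    (hWmeas : ∀ t f, Measurable (W t f))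
    (hindep : iIndepFun
      (fun t ω => fun f => W t f ω) ℙ)
    (honce : ∀ᵐ ω ∂ℙ, ∀ t, ∑ f, W t f ω ≤ 1)
    (γ : ℝ) (hγ : γ ∈ Set.Icc (0 : ℝ) (1 / 2))
    (x p : F → Fin T → ℝ)
    (hx : ∀ f t, x f t ∈ Set.Icc (0 : ℝ) 1) (hp : ∀ f t, p f t ∈ Set.Icc (0 : ℝ) 1)
    (hcap : ∀ i, ∑ t, ∑ f ∈ univ.filter (fun f => ι f = i), x f t * p f t ≤ 1)
    (β : I → Fin T → ℝ)
    (hβ : ∀ i t, β i t =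
      1 - γ * ∑ s ∈ Finset.Iio t, ∑ f ∈ univ.filter (fun f => ι f = i), x f s * p f s)
    (hmarg : ∀ t f, ℙ {ω | W t f ω = 1} =
      ENNReal.ofReal (γ * x f t * p f t / β (ι f) t))
    (SF : I → Fin T → Ω → ℝ)
    (hSF : ∀ i t ω, SF i t ω =
      if ∀ s < t, ∀ f, ι f = i → W s f ω = 0 then 1 else 0)
    (χ : F → Fin T → Ω → ℝ)
    (hχ : ∀ f t ω, χ f t ω = W t f ω * SF (ι f) t ω) :
    (∀ i t, (∫ ω, SF i t ω) = β i t) ∧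
    (∀ f t, (∫ ω, χ f t ω) = γ * x f t * p f t) ∧
    (∀ w : F → Fin T → ℝ, (∀ f t, 0 ≤ w f t) →
      (∫ ω, ∑ t, ∑ f, w f t * χ f t ω) =
        γ * ∑ t, ∑ f, w f t * x f t * p f t) :=
  stmt_3_general ι T W hW01 hWmeas hindep honce γ hγ x p hx hp hcap β hβ hmarg SF hSF χ hχ
end

section
/- For every ε ∈ (0,1): (a) the optimal value of the benchmark LP on this instance equals 2 − ε; i.e., sup{ a + b/ε : 0 ≤ a ≤ 1, 0 ≤ b ≤ ε, a + b ≤ 1 } = 2 − ε, attained at a = 1 − ε, b = ε; and (b) for every γ ∈ [0,1/2], the policy ATT(γ) run on the LP-optimal solution obtains expected profit γ(1−ε)·1 + ε·(γ/(1−γ(1−ε)))·(1−γ(1−ε))·(1/ε) = γ(2−ε). Since the clairvoyant optimal equals 2 − ε, ATT(γ) achieves a competitive ratio of exactly γ on this instance; in particular the competitive analysis of ATT(γ) is tight for every γ ∈ [0,1/2], unconditionally of the benchmark LP. -/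
open Set

/-- on the Figure-1 instance with parameter `ε ∈ (0,1)`:
(a) the benchmark-LP optimal value equals `2 - ε`, i.e.
`sup { a + b/ε : 0 ≤ a ≤ 1, 0 ≤ b ≤ ε, a + b ≤ 1 } = 2 - ε`, attained at
`a = 1 - ε`, `b = ε`; and (b) for every `γ ∈ [0,1/2]`, `ATT(γ)` run on the
LP-optimal solution obtains expected profit
`γ(1-ε)·1 + ε·(γ/(1-γ(1-ε)))·(1-γ(1-ε))·(1/ε) = γ(2-ε)`, hence (the
clairvoyant optimal being `2 - ε`) a competitive ratio of exactly `γ`: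
the competitive analysis of `ATT(γ)` is tight, unconditionally of the LP. -/
theorem stmt_5 (ε : ℝ) (hε : ε ∈ Ioo (0 : ℝ) 1) :
    (IsGreatest {v : ℝ | ∃ a b : ℝ, 0 ≤ a ∧ a ≤ 1 ∧ 0 ≤ b ∧ b ≤ ε ∧ a + b ≤ 1 ∧
        v = a + b / ε} (2 - ε) ∧
      (1 - ε) + ε / ε = 2 - ε ∧
      0 ≤ (1 - ε : ℝ) ∧ (1 - ε : ℝ) ≤ 1 ∧ (0 : ℝ) ≤ ε ∧ ε ≤ ε ∧ (1 - ε) + ε ≤ 1) ∧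
    (∀ γ : ℝ, γ ∈ Icc (0 : ℝ) (1 / 2) →
      γ * (1 - ε) * 1 + ε * (γ / (1 - γ * (1 - ε))) * (1 - γ * (1 - ε)) * (1 / ε) =
        γ * (2 - ε) ∧
      (γ * (1 - ε) * 1 + ε * (γ / (1 - γ * (1 - ε))) * (1 - γ * (1 - ε)) * (1 / ε)) /
        (2 - ε) = γ) := by
  obtain ⟨hε0, hε1⟩ := hε
  have hεne : ε ≠ 0 := ne_of_gt hε0
  refine ⟨⟨⟨⟨1 - ε, ε, by linarith, by linarith, le_of_lt hε0, le_refl _, by linarith,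
      by field_simp; ring⟩, ?_⟩, by field_simp; ring, by linarith, by linarith,
      le_of_lt hε0, le_refl _, by linarith⟩, ?_⟩
  · rintro v ⟨a, b, ha0, ha1, hb0, hbε, hab, rfl⟩
    rw [div_eq_mul_inv]
    have hinv : 0 < ε⁻¹ := inv_pos.mpr hε0
    have hc : ε * ε⁻¹ = 1 := mul_inv_cancel₀ hεne
    nlinarith [mul_nonneg (mul_nonneg (sub_nonneg.mpr hbε) (by linarith : (0:ℝ) ≤ 1 - ε)) hinv.le]
  · intro γ ⟨hγ0, hγ1⟩
    have hden : 1 - γ * (1 - ε) ≠ 0 := by nlinarith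
    have h2ε : (2 : ℝ) - ε ≠ 0 := by linarith
    constructor
    · field_simp
      ring
    · rw [div_eq_iff h2ε]
      field_simp
      ring
end

section
/- Let F_1, …, F_m be pairwise disjoint subsets of F and set H_i := min(1, ∑_{t=1}^T ∑_{f∈F_i} W_{f,t}). Then the random variables H_1, …, H_m are negatively correlated in the sense that Cov(H_i, H_j) ≤ 0 for all i ≠ j, and consequently Var[∑_{i=1}^m H_i] ≤ ∑_{i=1}^m Var[H_i]. -/
/-!
Almost surely every round hits at most one assignment, so each round sum
`Xᵢₜ = ∑_{f ∈ Fᵢ} W_{f,t}` is `0` or `1` and `Hᵢ = 1 - Gᵢ` with `Gᵢ = ∏ₜ (1 - Xᵢₜ)`; hence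
`Cov(Hᵢ, Hⱼ) = Cov(Gᵢ, Gⱼ)`. By independence of the rounds, `E[GᵢGⱼ]` and `E[Gᵢ]E[Gⱼ]` are
products over the rounds, and in a single round disjointness of `Fᵢ` and `Fⱼ` forces
`XᵢₜXⱼₜ = 0`, so `E[(1 - Xᵢₜ)(1 - Xⱼₜ)] = 1 - E Xᵢₜ - E Xⱼₜ ≤ (1 - E Xᵢₜ)(1 - E Xⱼₜ)`.
The variance bound follows by expanding the variance of the sum into covariances.
-/

open MeasureTheory ProbabilityTheory Finset

noncomputable def cov {Ω : Type*} [MeasureSpace Ω] (X Y : Ω → ℝ) : ℝ :=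
  ∫ ω, (X ω - ∫ ω', X ω') * (Y ω - ∫ ω', Y ω')

section General

variable {Ω : Type*} {mΩ : MeasurableSpace Ω} {μ : Measure Ω}

lemma covariance_congr_ae {X X' Y Y' : Ω → ℝ} (hX : X =ᵐ[μ] X') (hY : Y =ᵐ[μ] Y') :
    cov[X, Y; μ] = cov[X', Y'; μ] := by
  unfold covariance
  rw [integral_congr_ae hX, integral_congr_ae hY]
  refine integral_congr_ae ?_
  filter_upwards [hX, hY] with ω hXω hYω
  rw [hXω, hYω]

lemma variance_fun_sum_le_sum_variance [IsFiniteMeasure μ] {ι : Type*} [Fintype ι]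
    {X : ι → Ω → ℝ} (hX : ∀ i, MemLp (X i) 2 μ)
    (hcov : ∀ i j, i ≠ j → cov[X i, X j; μ] ≤ 0) :
    Var[fun ω ↦ ∑ i, X i ω; μ] ≤ ∑ i, Var[X i; μ] := by
  classical
  rw [variance_fun_sum hX]
  refine sum_le_sum fun i _ ↦ ?_
  rw [← add_sum_erase _ _ (mem_univ i), covariance_self (hX i).aemeasurable]
  have hoff : ∑ j ∈ univ.erase i, cov[X i, X j; μ] ≤ 0 :=
    sum_nonpos fun j hj ↦ hcov i j (ne_of_mem_erase hj).symm
  linarith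

lemma integral_one_sub_mul_one_sub_le [IsProbabilityMeasure μ] {a b : Ω → ℝ}
    (ha : Integrable a μ) (hb : Integrable b μ) (ha0 : 0 ≤ᵐ[μ] a) (hb0 : 0 ≤ᵐ[μ] b)
    (hab : ∀ᵐ ω ∂μ, a ω * b ω = 0) :
    ∫ ω, (1 - a ω) * (1 - b ω) ∂μ ≤ (∫ ω, 1 - a ω ∂μ) * ∫ ω, 1 - b ω ∂μ := by
  have hexpand : (fun ω ↦ (1 - a ω) * (1 - b ω)) =ᵐ[μ] fun ω ↦ 1 - a ω - b ω := by
    filter_upwards [hab] with ω hω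
    linear_combination hω
  have h1a : Integrable (fun ω ↦ 1 - a ω) μ := (integrable_const 1).sub ha
  rw [integral_congr_ae hexpand, integral_sub h1a hb,
    integral_sub (integrable_const 1) ha, integral_sub (integrable_const 1) hb, integral_const,
    probReal_univ, one_smul]
  nlinarith [integral_nonneg_of_ae ha0, integral_nonneg_of_ae hb0]

lemma ProbabilityTheory.iIndepFun.integral_prod_mul_prod_le {ι : Type*} [Fintype ι]
    {β : ι → Type*} [∀ i, MeasurableSpace (β i)] {V : ∀ i, Ω → β i} (hV : iIndepFun V μ)
    (hVm : ∀ i, Measurable (V i)) {φ ψ : ∀ i, β i → ℝ} (hφ : ∀ i, Measurable (φ i))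
    (hψ : ∀ i, Measurable (ψ i)) (h0 : ∀ i, 0 ≤ ∫ ω, φ i (V i ω) * ψ i (V i ω) ∂μ)
    (hle : ∀ i, ∫ ω, φ i (V i ω) * ψ i (V i ω) ∂μ
      ≤ (∫ ω, φ i (V i ω) ∂μ) * ∫ ω, ψ i (V i ω) ∂μ) :
    ∫ ω, (∏ i, φ i (V i ω)) * ∏ i, ψ i (V i ω) ∂μ
      ≤ (∫ ω, ∏ i, φ i (V i ω) ∂μ) * ∫ ω, ∏ i, ψ i (V i ω) ∂μ := by
  have hprod {χ : ∀ i, β i → ℝ} (hχ : ∀ i, Measurable (χ i)) :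
      ∫ ω, ∏ i, χ i (V i ω) ∂μ = ∏ i, ∫ ω, χ i (V i ω) ∂μ :=
    hV.integral_fun_prod_comp (fun i ↦ (hVm i).aemeasurable)
      (fun i ↦ (hχ i).aestronglyMeasurable)
  simp_rw [← prod_mul_distrib]
  rw [hprod (χ := fun i x ↦ φ i x * ψ i x) fun i ↦ (hφ i).mul (hψ i), hprod hφ, hprod hψ,
    ← prod_mul_distrib]
  exact prod_le_prod (fun i _ ↦ h0 i) fun i _ ↦ hle i

end General

lemma sum_eq_zero_or_eq_one_of_sum_le_one {F : Type*} [Fintype F] {w : F → ℝ}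
    (hw : ∀ f, w f = 0 ∨ w f = 1) (hsum : ∑ f, w f ≤ 1) (s : Finset F) :
    ∑ f ∈ s, w f = 0 ∨ ∑ f ∈ s, w f = 1 := by
  have hw0 : ∀ f, 0 ≤ w f := fun f ↦ by rcases hw f with h | h <;> simp [h]
  by_cases hzero : ∀ f ∈ s, w f = 0
  · exact .inl (sum_eq_zero hzero)
  push Not at hzero
  obtain ⟨f, hfs, hf⟩ := hzero
  refine .inr (le_antisymm ?_ ?_)
  · exact (sum_le_sum_of_subset_of_nonneg (subset_univ s) fun g _ _ ↦ hw0 g).trans hsum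
  · simpa [(hw f).resolve_left hf] using single_le_sum (fun g _ ↦ hw0 g) hfs

lemma min_one_sum_eq_one_sub_prod_one_sub {ι : Type*} [Fintype ι] {x : ι → ℝ}
    (hx : ∀ i, x i = 0 ∨ x i = 1) :
    min 1 (∑ i, x i) = 1 - ∏ i, (1 - x i) := by
  by_cases hhit : ∃ i, x i = 1
  · obtain ⟨i, hi⟩ := hhit
    have hx0 : ∀ j, 0 ≤ x j := fun j ↦ by rcases hx j with h | h <;> simp [h]
    have hsum : 1 ≤ ∑ j, x j := hi ▸ single_le_sum (fun j _ ↦ hx0 j) (mem_univ i)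
    rw [min_eq_left hsum, prod_eq_zero (mem_univ i) (by simp [hi]), sub_zero]
  · push Not at hhit
    have hx0 : ∀ i, x i = 0 := fun i ↦ (hx i).resolve_right (hhit i)
    simp [hx0]

section RoundProcess

variable {Ω F : Type*} [MeasurableSpace Ω] {μ : Measure Ω} {T : ℕ} {W : Fin T → F → Ω → ℝ}

lemma ae_sum_eq_zero_or_eq_one [Fintype F] (hW01 : ∀ t f ω, W t f ω = 0 ∨ W t f ω = 1)
    (honce : ∀ᵐ ω ∂μ, ∀ t, ∑ f, W t f ω ≤ 1) :
    ∀ᵐ ω ∂μ, ∀ t (s : Finset F), ∑ f ∈ s, W t f ω = 0 ∨ ∑ f ∈ s, W t f ω = 1 :=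
  honce.mono fun ω hω t ↦ sum_eq_zero_or_eq_one_of_sum_le_one (hW01 t · ω) (hω t)

lemma min_one_sum_ae_eq_one_sub_prod [Fintype F] (hW01 : ∀ t f ω, W t f ω = 0 ∨ W t f ω = 1)
    (honce : ∀ᵐ ω ∂μ, ∀ t, ∑ f, W t f ω ≤ 1) (s : Finset F) :
    (fun ω ↦ min 1 (∑ t, ∑ f ∈ s, W t f ω)) =ᵐ[μ]
      fun ω ↦ 1 - ∏ t, (1 - ∑ f ∈ s, W t f ω) := by
  filter_upwards [ae_sum_eq_zero_or_eq_one hW01 honce] with ω hω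
  exact min_one_sum_eq_one_sub_prod_one_sub (hω · s)

lemma memLp_min_one_sum [IsFiniteMeasure μ] (hW01 : ∀ t f ω, W t f ω = 0 ∨ W t f ω = 1)
    (hWmeas : ∀ t f, Measurable (W t f)) (s : Finset F) :
    MemLp (fun ω ↦ min 1 (∑ t, ∑ f ∈ s, W t f ω)) 2 μ := by
  have hW0 : ∀ t f ω, 0 ≤ W t f ω := fun t f ω ↦ by rcases hW01 t f ω with h | h <;> simp [h]
  refine MemLp.of_bound (by fun_prop) 1 (ae_of_all _ fun ω ↦ ?_)
  rw [Real.norm_eq_abs, abs_le]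
  refine ⟨?_, min_le_left _ _⟩
  have : 0 ≤ min 1 (∑ t, ∑ f ∈ s, W t f ω) :=
    le_min zero_le_one (sum_nonneg fun t _ ↦ sum_nonneg fun f _ ↦ hW0 t f ω)
  linarith

lemma memLp_prod_one_sub_sum [Fintype F] [IsFiniteMeasure μ]
    (hW01 : ∀ t f ω, W t f ω = 0 ∨ W t f ω = 1) (hWmeas : ∀ t f, Measurable (W t f))
    (honce : ∀ᵐ ω ∂μ, ∀ t, ∑ f, W t f ω ≤ 1) (s : Finset F) :
    MemLp (fun ω ↦ ∏ t, (1 - ∑ f ∈ s, W t f ω)) 2 μ := by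
  refine MemLp.of_bound (by fun_prop) 1 ?_
  filter_upwards [ae_sum_eq_zero_or_eq_one hW01 honce] with ω hω
  have hfactor : ∀ t, 0 ≤ 1 - ∑ f ∈ s, W t f ω ∧ 1 - ∑ f ∈ s, W t f ω ≤ 1 := fun t ↦ by
    rcases hω t s with h | h <;> simp [h]
  rw [Real.norm_eq_abs, abs_of_nonneg (prod_nonneg fun t _ ↦ (hfactor t).1)]
  exact prod_le_one (fun t _ ↦ (hfactor t).1) fun t _ ↦ (hfactor t).2

lemma integral_prod_one_sub_sum_mul_le [Fintype F] [IsProbabilityMeasure μ]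
    (hW01 : ∀ t f ω, W t f ω = 0 ∨ W t f ω = 1) (hWmeas : ∀ t f, Measurable (W t f))
    (hindep : iIndepFun (fun t ω f ↦ W t f ω) μ) (honce : ∀ᵐ ω ∂μ, ∀ t, ∑ f, W t f ω ≤ 1)
    {s s' : Finset F} (hss' : Disjoint s s') :
    ∫ ω, (∏ t, (1 - ∑ f ∈ s, W t f ω)) * ∏ t, (1 - ∑ f ∈ s', W t f ω) ∂μ
      ≤ (∫ ω, ∏ t, (1 - ∑ f ∈ s, W t f ω) ∂μ) * ∫ ω, ∏ t, (1 - ∑ f ∈ s', W t f ω) ∂μ := by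
  classical
  have h01 := ae_sum_eq_zero_or_eq_one hW01 honce
  have hint (t) (s : Finset F) : Integrable (fun ω ↦ ∑ f ∈ s, W t f ω) μ :=
    integrable_finsetSum s fun f _ ↦ Integrable.of_bound (hWmeas t f).aestronglyMeasurable 1
      (ae_of_all _ fun ω ↦ by rcases hW01 t f ω with h | h <;> simp [h])
  have hnonneg (t) (s : Finset F) : 0 ≤ᵐ[μ] fun ω ↦ ∑ f ∈ s, W t f ω := by
    filter_upwards [h01] with ω hω
    rcases hω t s with h | h <;> simp [h]
  have hdisjoint (t) : ∀ᵐ ω ∂μ, (∑ f ∈ s, W t f ω) * ∑ f ∈ s', W t f ω = 0 := by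
    filter_upwards [h01] with ω hω
    have hunion := hω t (s ∪ s')
    rw [sum_union hss'] at hunion
    rcases hω t s with h | h <;> rcases hω t s' with h' | h' <;> simp_all
  refine hindep.integral_prod_mul_prod_le (φ := fun _ v ↦ 1 - ∑ f ∈ s, v f)
    (ψ := fun _ v ↦ 1 - ∑ f ∈ s', v f) (fun t ↦ by fun_prop) (by fun_prop) (by fun_prop)
    (fun t ↦ integral_nonneg_of_ae ?_) fun t ↦ integral_one_sub_mul_one_sub_le (hint t s)
      (hint t s') (hnonneg t s) (hnonneg t s') (hdisjoint t)
  filter_upwards [h01] with ω hω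
  rcases hω t s with h | h <;> rcases hω t s' with h' | h' <;> simp [h, h']

lemma covariance_min_one_sum_nonpos [Fintype F] [IsProbabilityMeasure μ]
    (hW01 : ∀ t f ω, W t f ω = 0 ∨ W t f ω = 1) (hWmeas : ∀ t f, Measurable (W t f))
    (hindep : iIndepFun (fun t ω f ↦ W t f ω) μ) (honce : ∀ᵐ ω ∂μ, ∀ t, ∑ f, W t f ω ≤ 1)
    {s s' : Finset F} (hss' : Disjoint s s') :
    cov[fun ω ↦ min 1 (∑ t, ∑ f ∈ s, W t f ω), fun ω ↦ min 1 (∑ t, ∑ f ∈ s', W t f ω); μ]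
      ≤ 0 := by
  have hmemLp := memLp_prod_one_sub_sum hW01 hWmeas honce (μ := μ)
  rw [covariance_congr_ae (min_one_sum_ae_eq_one_sub_prod hW01 honce s)
      (min_one_sum_ae_eq_one_sub_prod hW01 honce s'),
    covariance_const_sub_left ((hmemLp s).integrable one_le_two),
    covariance_const_sub_right ((hmemLp s').integrable one_le_two), neg_neg,
    covariance_eq_sub (hmemLp s) (hmemLp s'), sub_nonpos]
  exact integral_prod_one_sub_sum_mul_le hW01 hWmeas hindep honce hss'

end RoundProcess

/-- in the round-process model (round families `(W t f)_f`
mutually independent across `t`, and a.s. at most one `W t f` equal to `1` per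
round), for pairwise disjoint subsets `Fs 1, …, Fs m` of `F` and
`H i := min 1 (∑_t ∑_{f ∈ Fs i} W t f)`, the random variables `H 1, …, H m`
are negatively correlated — `Cov(H i, H j) ≤ 0` for `i ≠ j` — and consequently
`Var[∑ i, H i] ≤ ∑ i, Var[H i]`. -/
theorem stmt_6 {Ω : Type*} [MeasureSpace Ω] [IsProbabilityMeasure (ℙ : Measure Ω)]
    {F : Type*} [Fintype F] (T : ℕ)
    (W : Fin T → F → Ω → ℝ)
    (hW01 : ∀ t f ω, W t f ω = 0 ∨ W t f ω = 1)
    (hWmeas : ∀ t f, Measurable (W t f))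
    (hindep : iIndepFun
      (fun t ω => fun f => W t f ω) ℙ)
    (honce : ∀ᵐ ω ∂ℙ, ∀ t, ∑ f, W t f ω ≤ 1)
    (m : ℕ) (Fs : Fin m → Finset F)
    (hdisj : ∀ i j, i ≠ j → Disjoint (Fs i) (Fs j))
    (H : Fin m → Ω → ℝ)
    (hH : ∀ i ω, H i ω = min 1 (∑ t, ∑ f ∈ Fs i, W t f ω)) :
    (∀ i j, i ≠ j → cov (H i) (H j) ≤ 0) ∧
    variance (fun ω => ∑ i, H i ω) ℙ ≤ ∑ i, variance (H i) ℙ := by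
  have hHeq (i : Fin m) : H i = fun ω ↦ min 1 (∑ t, ∑ f ∈ Fs i, W t f ω) := funext (hH i)
  -- `cov X Y` unfolds to `cov[X, Y; ℙ]`
  have hcov (i j : Fin m) (hij : i ≠ j) : cov[H i, H j; ℙ] ≤ 0 := by
    rw [hHeq i, hHeq j]
    exact covariance_min_one_sum_nonpos hW01 hWmeas hindep honce (hdisj i j hij)
  have hmemLp (i : Fin m) : MemLp (H i) 2 ℙ := hHeq i ▸ memLp_min_one_sum hW01 hWmeas (Fs i)
  exact ⟨hcov, variance_fun_sum_le_sum_variance hmemLp hcov⟩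
end

section
/- Under the ATT(γ) marginals with γ ∈ [0,1/2], let H_i := min(1, ∑_{t=1}^T ∑_{f∈F_i} W_{f,t}) be the number of successful assignments involving offline agent i (equal to ∑_{t}∑_{f∈F_i} χ_{f,t}) and H := ∑_{i∈I} H_i the total number of successful assignments. Then each H_i is {0,1}-valued with E[H_i] ≤ γ, and Var[H] ≤ γ(1−γ)·|I|. (Theorem: variance analysis of ATT(γ); here |I| = B is the total matching capacity.) -/
open MeasureTheory ProbabilityTheory Finset

/-!
Agent `i` stays unmatched exactly when no `W t f` with `ι f = i` fires. Since at most one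
assignment fires per round, the probability that none of a set `G` fires in round `t` is
`1 - ∑ f ∈ G, P(W t f = 1)`, and by independence of the rounds the probability that none ever
fires is the product of these factors. Under the `ATT(γ)` marginals the factor of agent `i` is
`1 - γ c t / (1 - γ ∑ s < t, c s)` with `c t = ∑ f with ι f = i, x f t * p f t`, and the
product telescopes to `1 - γ ∑ t, c t`; hence `E[H i] = γ ∑ t, c t ≤ γ`. For disjoint `G`, `G'`
the factors satisfy `1 - (a + b) ≤ (1 - a)(1 - b)`, so the "unmatched" events of distinct
agents are negatively correlated, all covariances `cov[H i, H j]` with `i ≠ j` are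
nonpositive, and `Var[H] ≤ ∑ i, E[H i](1 - E[H i]) ≤ |I| γ (1 - γ)` because
`E[H i] ≤ γ ≤ 1/2`.
-/

theorem Finset.prod_one_sub_div_one_sub_sum_lt {K α : Type*} [Field K] [LinearOrder α]
    (s : Finset α) (a : α → K) (h : ∀ t ∈ s, 1 - ∑ u ∈ s with u < t, a u ≠ 0) :
    ∏ t ∈ s, (1 - a t / (1 - ∑ u ∈ s with u < t, a u)) = 1 - ∑ t ∈ s, a t := by
  induction s using Finset.induction_on_max with
  | empty => simp
  | insert m s hlt ih =>
    have hm : m ∉ s := fun hm => lt_irrefl m (hlt m hm)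
    have hbefore : ∀ t ∈ s, {u ∈ insert m s | u < t} = {u ∈ s | u < t} := fun t ht => by
      rw [filter_insert, if_neg (not_lt.2 (hlt t ht).le)]
    have hall : {u ∈ insert m s | u < m} = s := by
      rw [filter_insert, if_neg (lt_irrefl m), filter_true_of_mem hlt]
    have hm0 := h m (mem_insert_self m s)
    rw [hall] at hm0
    rw [prod_insert hm, sum_insert hm, prod_congr rfl fun t ht => by rw [hbefore t ht],
      ih fun t ht => by simpa only [hbefore t ht] using h t (mem_insert_of_mem ht), hall]
    field_simp
    ring

theorem Finset.prod_one_sub_div_one_sub_sum_Iio {K α : Type*} [Field K] [LinearOrder α]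
    [Fintype α] [LocallyFiniteOrderBot α] (a : α → K) (h : ∀ t, 1 - ∑ u ∈ Iio t, a u ≠ 0) :
    ∏ t, (1 - a t / (1 - ∑ u ∈ Iio t, a u)) = 1 - ∑ t, a t := by
  simpa only [filter_gt_eq_Iio] using
    univ.prod_one_sub_div_one_sub_sum_lt a fun t _ => by simpa only [filter_gt_eq_Iio] using h t

theorem Finset.prod_one_sub_add_le_prod_mul_prod {ι : Type*} (s : Finset ι) {a b : ι → ℝ}
    (ha : ∀ i ∈ s, 0 ≤ a i) (hb : ∀ i ∈ s, 0 ≤ b i) (hab : ∀ i ∈ s, a i + b i ≤ 1) :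
    ∏ i ∈ s, (1 - (a i + b i)) ≤ (∏ i ∈ s, (1 - a i)) * ∏ i ∈ s, (1 - b i) := by
  rw [← prod_mul_distrib]
  refine prod_le_prod (fun i hi => by linarith [hab i hi]) fun i hi => ?_
  nlinarith [mul_nonneg (ha i hi) (hb i hi)]

section Events

variable {Ω : Type*} [MeasurableSpace Ω] {μ : Measure Ω} [IsProbabilityMeasure μ]

theorem measureReal_compl_inter_compl_le_mul {A B : Set Ω} (hA : MeasurableSet A)
    (hB : MeasurableSet B) (h : μ.real (A ∩ B) ≤ μ.real A * μ.real B) :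
    μ.real (Aᶜ ∩ Bᶜ) ≤ μ.real Aᶜ * μ.real Bᶜ := by
  have hunion := measureReal_union_add_inter (μ := μ) (s := A) hB
  rw [← Set.compl_union, probReal_compl_eq_one_sub (hA.union hB), probReal_compl_eq_one_sub hA,
    probReal_compl_eq_one_sub hB]
  nlinarith

theorem memLp_indicator_one {A : Set Ω} (hA : MeasurableSet A) (p : ENNReal) :
    MemLp (A.indicator (1 : Ω → ℝ)) p μ :=
  memLp_indicator_const p hA 1 (Or.inr (by finiteness))

theorem covariance_indicator_one {A B : Set Ω} (hA : MeasurableSet A) (hB : MeasurableSet B) :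
    cov[A.indicator 1, B.indicator 1; μ] = μ.real (A ∩ B) - μ.real A * μ.real B := by
  rw [covariance_eq_sub (memLp_indicator_one hA 2) (memLp_indicator_one hB 2),
    ← Set.inter_indicator_one,
    integral_indicator_one (hA.inter hB), integral_indicator_one hA, integral_indicator_one hB]

theorem variance_sum_indicator_le {ι : Type*} [Fintype ι] {B : ι → Set Ω}
    (hB : ∀ i, MeasurableSet (B i))
    (hneg : Pairwise fun i j => μ.real (B i ∩ B j) ≤ μ.real (B i) * μ.real (B j)) :
    Var[fun ω => ∑ i, (B i).indicator 1 ω; μ] ≤ ∑ i, μ.real (B i) * (1 - μ.real (B i)) := by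
  classical
  rw [variance_fun_sum fun i => memLp_indicator_one (hB i) 2]
  refine sum_le_sum fun i _ => ?_
  rw [Fintype.sum_eq_add_sum_compl i]
  have hoff : ∑ j ∈ {i}ᶜ, cov[(B i).indicator 1, (B j).indicator 1; μ] ≤ 0 :=
    sum_nonpos fun j hj => by
      rw [covariance_indicator_one (hB i) (hB j)]
      exact sub_nonpos.2 (hneg (Ne.symm (by simpa using hj)))
  rw [covariance_indicator_one (hB i) (hB i), Set.inter_self]
  linarith

theorem measureReal_forall_eq_zero {α : Type*} [Fintype α] {Y : α → Ω → ℝ}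
    (h01 : ∀ f ω, Y f ω = 0 ∨ Y f ω = 1) (hY : ∀ f, Measurable (Y f))
    (hsum : ∀ᵐ ω ∂μ, ∑ f, Y f ω ≤ 1) (G : Finset α) :
    μ.real {ω | ∀ f ∈ G, Y f ω = 0} = 1 - ∑ f ∈ G, μ.real {ω | Y f ω = 1} := by
  classical
  have hcompl : {ω | ∀ f ∈ G, Y f ω = 0} = (⋃ f ∈ G, {ω | Y f ω = 1})ᶜ := by
    ext ω
    simp only [Set.mem_ofPred_eq, Set.compl_iUnion, Set.mem_iInter]
    exact forall₂_congr fun f _ =>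
      ⟨fun h h1 => by simp [h] at h1, fun h => (h01 f ω).resolve_right h⟩
  have hmeas : ∀ f, MeasurableSet {ω | Y f ω = 1} := fun f => hY f (measurableSet_singleton 1)
  have hdisj : Set.Pairwise G fun f g => AEDisjoint μ {ω | Y f ω = 1} {ω | Y g ω = 1} := by
    intro f _ g _ hfg
    refine measure_mono_null (fun ω ⟨(hf : Y f ω = 1), (hg : Y g ω = 1)⟩ => ?_) (ae_iff.1 hsum)
    have hpair : Y f ω + Y g ω ≤ ∑ f, Y f ω := by
      rw [← sum_pair (f := fun f => Y f ω) hfg]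
      exact sum_le_sum_of_subset_of_nonneg (subset_univ _) fun f _ _ =>
        (h01 f ω).elim Eq.ge fun h => h ▸ zero_le_one
    show ¬ ∑ f, Y f ω ≤ 1
    linarith
  rw [hcompl, probReal_compl_eq_one_sub (G.measurableSet_biUnion fun f _ => hmeas f),
    measureReal_biUnion_finset₀ hdisj fun f _ => (hmeas f).nullMeasurableSet]

end Events

section RoundProcess

variable {Ω τ F : Type*}

def noSuccess (W : τ → F → Ω → ℝ) (G : Finset F) : Set Ω :=
  {ω | ∀ t, ∀ f ∈ G, W t f ω = 0}

variable [Fintype τ] {W : τ → F → Ω → ℝ}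

theorem min_one_sum_eq_indicator_compl_noSuccess (h01 : ∀ t f ω, W t f ω = 0 ∨ W t f ω = 1)
    (G : Finset F) (ω : Ω) :
    min 1 (∑ t, ∑ f ∈ G, W t f ω) = (noSuccess W G)ᶜ.indicator 1 ω := by
  have hnonneg : ∀ t f, 0 ≤ W t f ω := fun t f =>
    (h01 t f ω).elim Eq.ge fun h => h ▸ zero_le_one
  by_cases hω : ω ∈ noSuccess W G
  · rw [Set.indicator_of_notMem (Set.notMem_compl_iff.2 hω),
      sum_eq_zero fun t _ => sum_eq_zero fun f hf => hω t f hf]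
    norm_num
  · obtain ⟨t, f, hf, hWf⟩ : ∃ t, ∃ f ∈ G, W t f ω ≠ 0 := by simpa [noSuccess] using hω
    rw [Set.indicator_of_mem hω, Pi.one_apply, min_eq_left]
    calc (1 : ℝ) = W t f ω := ((h01 t f ω).resolve_left hWf).symm
      _ ≤ ∑ f ∈ G, W t f ω := single_le_sum (fun g _ => hnonneg t g) hf
      _ ≤ ∑ t, ∑ f ∈ G, W t f ω :=
        single_le_sum (f := fun t => ∑ f ∈ G, W t f ω)
          (fun t _ => sum_nonneg fun g _ => hnonneg t g) (mem_univ t)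

variable [MeasurableSpace Ω] {μ : Measure Ω} [IsProbabilityMeasure μ]

theorem measurableSet_noSuccess (hW : ∀ t f, Measurable (W t f)) (G : Finset F) :
    MeasurableSet (noSuccess W G) := by
  simp only [noSuccess, Set.ofPred_forall]
  exact .iInter fun t => .biInter G.countable_toSet fun f _ => hW t f (measurableSet_singleton 0)

variable [Fintype F]

theorem measureReal_noSuccess (h01 : ∀ t f ω, W t f ω = 0 ∨ W t f ω = 1)
    (hW : ∀ t f, Measurable (W t f)) (hindep : iIndepFun (fun t ω => fun f => W t f ω) μ)
    (honce : ∀ᵐ ω ∂μ, ∀ t, ∑ f, W t f ω ≤ 1) (G : Finset F) :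
    μ.real (noSuccess W G) = ∏ t, (1 - ∑ f ∈ G, μ.real {ω | W t f ω = 1}) := by
  have hround : MeasurableSet {v : F → ℝ | ∀ f ∈ G, v f = 0} := by
    simp only [Set.ofPred_forall]
    exact .biInter G.countable_toSet fun f _ => measurable_pi_apply f (measurableSet_singleton 0)
  have hiInter : noSuccess W G = ⋂ t, (fun ω f => W t f ω) ⁻¹' {v | ∀ f ∈ G, v f = 0} := by
    ext; simp [noSuccess]
  rw [hiInter, measureReal_def, hindep.meas_iInter fun t => ⟨_, hround, rfl⟩, ENNReal.toReal_prod]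
  exact prod_congr rfl fun t _ =>
    measureReal_forall_eq_zero (h01 t) (hW t) (ae_all_iff.1 honce t) G

theorem measureReal_noSuccess_inter_le (h01 : ∀ t f ω, W t f ω = 0 ∨ W t f ω = 1)
    (hW : ∀ t f, Measurable (W t f)) (hindep : iIndepFun (fun t ω => fun f => W t f ω) μ)
    (honce : ∀ᵐ ω ∂μ, ∀ t, ∑ f, W t f ω ≤ 1)
    {G G' : Finset F} (hGG' : Disjoint G G') :
    μ.real (noSuccess W G ∩ noSuccess W G') ≤
      μ.real (noSuccess W G) * μ.real (noSuccess W G') := by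
  classical
  have hunion : noSuccess W G ∩ noSuccess W G' = noSuccess W (G ∪ G') := by
    ext; simp [noSuccess, or_imp, forall_and]
  have hsum_le : ∀ t,
      ∑ f ∈ G, μ.real {ω | W t f ω = 1} + ∑ f ∈ G', μ.real {ω | W t f ω = 1} ≤ 1 := fun t => by
      have hround := measureReal_forall_eq_zero (h01 t) (hW t) (ae_all_iff.1 honce t) (G ∪ G')
      rw [sum_union hGG'] at hround
      linarith [measureReal_nonneg (μ := μ) (s := {ω | ∀ f ∈ G ∪ G', W t f ω = 0})]
  simp only [hunion, measureReal_noSuccess h01 hW hindep honce, sum_union hGG']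
  exact prod_one_sub_add_le_prod_mul_prod _ (fun _ _ => sum_nonneg fun _ _ => measureReal_nonneg)
    (fun _ _ => sum_nonneg fun _ _ => measureReal_nonneg) fun t _ => hsum_le t

end RoundProcess

section ATT

variable {F I τ : Type*} [Fintype F] [DecidableEq I] [LinearOrder τ] [Fintype τ]
  [LocallyFiniteOrderBot τ] (ι : F → I) {γ : ℝ} {a : F → τ → ℝ}

theorem one_sub_mul_sum_Iio_fiber_pos (hγ : γ < 1) (ha : ∀ f t, 0 ≤ a f t)
    (hcap : ∀ i, ∑ t, ∑ f with ι f = i, a f t ≤ 1) (i : I) (t : τ) :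
    0 < 1 - γ * ∑ s ∈ Iio t, ∑ f with ι f = i, a f s := by
  have h0 : 0 ≤ ∑ s ∈ Iio t, ∑ f with ι f = i, a f s :=
    sum_nonneg fun s _ => sum_nonneg fun f _ => ha f s
  have h1 : ∑ s ∈ Iio t, ∑ f with ι f = i, a f s ≤ 1 :=
    (sum_le_sum_of_subset_of_nonneg (subset_univ _)
      fun s _ _ => sum_nonneg fun f _ => ha f s).trans (hcap i)
  rcases le_or_gt γ 0 with hγ0 | hγ0 <;> nlinarith

theorem prod_one_sub_sum_fiber_div_eq (hγ : γ < 1) (ha : ∀ f t, 0 ≤ a f t)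
    (hcap : ∀ i, ∑ t, ∑ f with ι f = i, a f t ≤ 1) (i : I) :
    ∏ t, (1 - ∑ f with ι f = i,
        γ * a f t / (1 - γ * ∑ s ∈ Iio t, ∑ g with ι g = ι f, a g s)) =
      1 - γ * ∑ t, ∑ f with ι f = i, a f t := by
  set c : τ → ℝ := fun t => γ * ∑ f with ι f = i, a f t with hc
  have hround : ∀ t, ∑ f with ι f = i,
      γ * a f t / (1 - γ * ∑ s ∈ Iio t, ∑ g with ι g = ι f, a g s) =
        c t / (1 - ∑ s ∈ Iio t, c s) := by
    intro t
    rw [sum_congr rfl fun f hf => by rw [(mem_filter.1 hf).2], ← sum_div, ← mul_sum, ← mul_sum]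
  rw [prod_congr rfl fun t _ => by rw [hround t], prod_one_sub_div_one_sub_sum_Iio c
    fun t => by
      simpa only [hc, mul_sum] using (one_sub_mul_sum_Iio_fiber_pos ι hγ ha hcap i t).ne',
    mul_sum]

theorem measureReal_noSuccess_fiber {Ω : Type*} [MeasurableSpace Ω] {μ : Measure Ω}
    [IsProbabilityMeasure μ] {W : τ → F → Ω → ℝ} (h01 : ∀ t f ω, W t f ω = 0 ∨ W t f ω = 1)
    (hW : ∀ t f, Measurable (W t f)) (hindep : iIndepFun (fun t ω => fun f => W t f ω) μ)
    (honce : ∀ᵐ ω ∂μ, ∀ t, ∑ f, W t f ω ≤ 1) (hγ : γ < 1) (ha : ∀ f t, 0 ≤ a f t)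
    (hcap : ∀ i, ∑ t, ∑ f with ι f = i, a f t ≤ 1)
    (hmarg : ∀ t f, μ.real {ω | W t f ω = 1} =
      γ * a f t / (1 - γ * ∑ s ∈ Iio t, ∑ g with ι g = ι f, a g s)) (i : I) :
    μ.real (noSuccess W {f | ι f = i}) = 1 - γ * ∑ t, ∑ f with ι f = i, a f t := by
  simp only [measureReal_noSuccess h01 hW hindep honce, hmarg]
  exact prod_one_sub_sum_fiber_div_eq ι hγ ha hcap i

end ATT

theorem mul_one_sub_le_mul_one_sub {m γ : ℝ} (hmγ : m ≤ γ) (hγ : γ ≤ 1 / 2) :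
    m * (1 - m) ≤ γ * (1 - γ) := by
  nlinarith

/-- variance analysis of `ATT(γ)`: in the round-process model
with `ATT(γ)` marginals `P(W t f = 1) = γ x f t p f t / β (ι f) t`,
`γ ∈ [0,1/2]`, let `H i := min 1 (∑_t ∑_{f : ι f = i} W t f)` be the number of
successful assignments involving offline agent `i`, and `H := ∑ i, H i` the
total number of successful assignments.  Then each `H i` is `{0,1}`-valued with
`E[H i] ≤ γ`, and `Var[H] ≤ γ(1-γ)·|I|` (here `|I| = B`, the total matching
capacity). -/
theorem stmt_7 {Ω : Type*} [MeasureSpace Ω] [IsProbabilityMeasure (ℙ : Measure Ω)]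
    {F I : Type*} [Fintype F] [Fintype I] [DecidableEq I]
    (ι : F → I) (T : ℕ)
    (W : Fin T → F → Ω → ℝ)
    (hW01 : ∀ t f ω, W t f ω = 0 ∨ W t f ω = 1)
    (hWmeas : ∀ t f, Measurable (W t f))
    (hindep : iIndepFun
      (fun t ω => fun f => W t f ω) ℙ)
    (honce : ∀ᵐ ω ∂ℙ, ∀ t, ∑ f, W t f ω ≤ 1)
    (γ : ℝ) (hγ : γ ∈ Set.Icc (0 : ℝ) (1 / 2))
    (x p : F → Fin T → ℝ)
    (hx : ∀ f t, x f t ∈ Set.Icc (0 : ℝ) 1) (hp : ∀ f t, p f t ∈ Set.Icc (0 : ℝ) 1)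
    (hcap : ∀ i, ∑ t, ∑ f ∈ univ.filter (fun f => ι f = i), x f t * p f t ≤ 1)
    (β : I → Fin T → ℝ)
    (hβ : ∀ i t, β i t =
      1 - γ * ∑ s ∈ Finset.Iio t, ∑ f ∈ univ.filter (fun f => ι f = i), x f s * p f s)
    (hmarg : ∀ t f, ℙ {ω | W t f ω = 1} =
      ENNReal.ofReal (γ * x f t * p f t / β (ι f) t))
    (H : I → Ω → ℝ)
    (hH : ∀ i ω, H i ω = min 1 (∑ t, ∑ f ∈ univ.filter (fun f => ι f = i), W t f ω)) :
    (∀ i, (∀ ω, H i ω = 0 ∨ H i ω = 1) ∧ (∫ ω, H i ω) ≤ γ) ∧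
    variance (fun ω => ∑ i, H i ω) ℙ ≤ γ * (1 - γ) * (Fintype.card I : ℝ) := by
  obtain ⟨hγ0, hγ2⟩ := hγ
  have hxp : ∀ f t, 0 ≤ x f t * p f t := fun f t => mul_nonneg (hx f t).1 (hp f t).1
  have hq : ∀ t f, (ℙ : Measure Ω).real {ω | W t f ω = 1} =
      γ * (x f t * p f t) / (1 - γ * ∑ s ∈ Iio t, ∑ g with ι g = ι f, x g s * p g s) := by
    intro t f
    have hβpos := hβ (ι f) t ▸ one_sub_mul_sum_Iio_fiber_pos ι (by linarith) hxp hcap (ι f) t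
    rw [measureReal_def, hmarg, ENNReal.toReal_ofReal
      (div_nonneg (mul_assoc γ _ _ ▸ mul_nonneg hγ0 (hxp f t)) hβpos.le), hβ, mul_assoc]
  set B : I → Set Ω := fun i => (noSuccess W {f | ι f = i})ᶜ
  have hBmeas : ∀ i, MeasurableSet (B i) := fun i => (measurableSet_noSuccess hWmeas _).compl
  have hPB : ∀ i, (ℙ : Measure Ω).real (B i) = γ * ∑ t, ∑ f with ι f = i, x f t * p f t := by
    intro i
    rw [probReal_compl_eq_one_sub (measurableSet_noSuccess hWmeas _),
      measureReal_noSuccess_fiber ι hW01 hWmeas hindep honce (by linarith) hxp hcap hq i]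
    ring
  have hPBγ : ∀ i, (ℙ : Measure Ω).real (B i) ≤ γ := fun i =>
    hPB i ▸ mul_le_of_le_one_right hγ0 (hcap i)
  obtain rfl : H = fun i => (B i).indicator 1 :=
    funext₂ fun i ω => (hH i ω).trans (min_one_sum_eq_indicator_compl_noSuccess hW01 _ ω)
  refine ⟨fun i => ⟨fun ω => ?_, ?_⟩, ?_⟩
  · by_cases hω : ω ∈ B i <;> simp [hω]
  · rw [integral_indicator_one (hBmeas i)]
    exact hPBγ i
  · calc variance (fun ω => ∑ i, (B i).indicator 1 ω) ℙ
        ≤ ∑ i, (ℙ : Measure Ω).real (B i) * (1 - (ℙ : Measure Ω).real (B i)) :=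
          variance_sum_indicator_le hBmeas fun i j hij =>
            measureReal_compl_inter_compl_le_mul (measurableSet_noSuccess hWmeas _)
              (measurableSet_noSuccess hWmeas _)
              (measureReal_noSuccess_inter_le hW01 hWmeas hindep honce
                (disjoint_filter.2 fun f _ hfi hfj => hij (hfi.symm.trans hfj)))
      _ ≤ ∑ _i : I, γ * (1 - γ) :=
        sum_le_sum fun i _ => mul_one_sub_le_mul_one_sub (hPBγ i) hγ2
      _ = γ * (1 - γ) * (Fintype.card I : ℝ) := by simp [mul_comm]
end

section
/- Under the SAMP(γ) marginals with γ ∈ [0,1], for every i ∈ I and t one has E[SF_{i,t}] = ∏_{s<t} (1 − γ ∑_{f∈F_i} x_{f,s} p_{f,s}) ≥ 1 − γ, and for every f ∈ F and t one has E[χ_{f,t}] ≥ (1−γ)·γ·x_{f,t}·p_{f,t}. Consequently, for any profits w_{f,t} ≥ 0, the expected total profit satisfies E[∑_{t=1}^T ∑_{f∈F} w_{f,t} χ_{f,t}] ≥ γ(1−γ)·∑_{t,f} w_{f,t} x_{f,t} p_{f,t}; in particular, SAMP(γ) attains a γ(1−γ) fraction of the LP objective value, and hence a competitive ratio of at least γ(1−γ)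 for MP-KHD (Theorem: competitive analysis of SAMP(γ)). -/
/-!
Round `s` is safe for agent `i` when none of the assignments in `F_i` fires in round `s`. Since at
most one assignment fires per round, the indicator of this event is almost surely
`1 - ∑_{f ∈ F_i} W_{f,s}`, whose mean is `1 - γ ∑_{f ∈ F_i} x_{f,s} p_{f,s}`. Safety at time `t` is
the product of these indicators over the rounds `s < t`, which are independent, so its mean is the
product of the means; the Weierstrass inequality `∏ (1 - a_s) ≥ 1 - ∑ a_s` together with the
capacity constraint of the LP bounds it below by `1 - γ`. Success of `f` at `t` additionally
requires `W_{f,t} = 1`, an event of round `t` that is independent of safety at time `t`.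
-/

open MeasureTheory ProbabilityTheory Finset

lemma one_sub_sum_le_prod_one_sub {ι : Type*} (s : Finset ι) {a : ι → ℝ}
    (h0 : ∀ i ∈ s, 0 ≤ a i) (h1 : ∀ i ∈ s, a i ≤ 1) :
    1 - ∑ i ∈ s, a i ≤ ∏ i ∈ s, (1 - a i) := by
  induction s using Finset.cons_induction with
  | empty => simp
  | cons j s hj ih =>
    simp only [forall_mem_cons] at h0 h1
    rw [sum_cons, prod_cons]
    have ih := ih h0.2 h1.2
    have hs : 0 ≤ ∑ i ∈ s, a i := sum_nonneg h0.2
    nlinarith [mul_le_mul_of_nonneg_left ih (sub_nonneg.2 h1.1)]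

lemma one_sub_le_prod_one_sub_mul {ι : Type*} (s : Finset ι) {γ : ℝ} {a : ι → ℝ}
    (hγ : γ ∈ Set.Icc (0 : ℝ) 1) (ha : ∀ i ∈ s, 0 ≤ a i) (hsum : ∑ i ∈ s, a i ≤ 1) :
    1 - γ ≤ ∏ i ∈ s, (1 - γ * a i) :=
  calc 1 - γ ≤ 1 - ∑ i ∈ s, γ * a i := by rw [← mul_sum]; nlinarith [hγ.1]
    _ ≤ _ := one_sub_sum_le_prod_one_sub s (fun i hi => mul_nonneg hγ.1 (ha i hi))
      fun i hi => mul_le_one₀ hγ.2 (ha i hi) ((single_le_sum ha hi).trans hsum)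

section Integral

variable {Ω : Type*} {mΩ : MeasurableSpace Ω} {μ : Measure Ω} {g : Ω → ℝ}

lemma eq_indicator_one_of_zero_or_one (h01 : ∀ ω, g ω = 0 ∨ g ω = 1) :
    g = {ω | g ω = 1}.indicator 1 := by
  ext ω
  rcases h01 ω with h | h <;> simp [Set.indicator, h]

lemma integrable_of_zero_or_one [IsFiniteMeasure μ] (hg : Measurable g)
    (h01 : ∀ ω, g ω = 0 ∨ g ω = 1) : Integrable g μ := by
  rw [eq_indicator_one_of_zero_or_one h01]
  exact (integrable_const 1).indicator (measurableSet_eq_fun hg measurable_const)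

lemma integral_of_zero_or_one (hg : Measurable g) (h01 : ∀ ω, g ω = 0 ∨ g ω = 1) :
    ∫ ω, g ω ∂μ = μ.real {ω | g ω = 1} := by
  conv_lhs => rw [eq_indicator_one_of_zero_or_one h01]
  exact integral_indicator_one (measurableSet_eq_fun hg measurable_const)

lemma sum_sum_mul_le_integral {κ₁ κ₂ : Type*} (s₁ : Finset κ₁) (s₂ : Finset κ₂)
    {a w : κ₁ → κ₂ → ℝ} {g : κ₁ → κ₂ → Ω → ℝ} (hw : ∀ i j, 0 ≤ w i j)
    (hg : ∀ i j, Integrable (g i j) μ) (hle : ∀ i j, a i j ≤ ∫ ω, g i j ω ∂μ) :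
    ∑ i ∈ s₁, ∑ j ∈ s₂, w i j * a i j ≤ ∫ ω, ∑ i ∈ s₁, ∑ j ∈ s₂, w i j * g i j ω ∂μ := by
  rw [integral_finsetSum _ fun i _ => integrable_finsetSum _ fun j _ => (hg i j).const_mul _]
  refine sum_le_sum fun i _ => ?_
  rw [integral_finsetSum _ fun j _ => (hg i j).const_mul _]
  refine sum_le_sum fun j _ => ?_
  rw [integral_const_mul]
  exact mul_le_mul_of_nonneg_left (hle i j) (hw i j)

end Integral

open scoped Classical in
noncomputable def vanishingIndicator {F : Type*} (S : Finset F) (v : F → ℝ) : ℝ :=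
  if ∀ f ∈ S, v f = 0 then 1 else 0

section VanishingIndicator

variable {F : Type*}

lemma measurable_vanishingIndicator (S : Finset F) : Measurable (vanishingIndicator S) := by
  refine Measurable.ite ?_ measurable_const measurable_const
  simp only [Set.ofPred_forall]
  exact Finset.measurableSet_biInter S fun f _ =>
    measurableSet_eq_fun (measurable_pi_apply f) measurable_const

lemma vanishingIndicator_eq_zero_or_one (S : Finset F) (v : F → ℝ) :
    vanishingIndicator S v = 0 ∨ vanishingIndicator S v = 1 := by
  unfold vanishingIndicator
  split_ifs <;> simp

variable [Fintype F]

lemma vanishingIndicator_eq_one_sub_sum {v : F → ℝ} (h01 : ∀ f, v f = 0 ∨ v f = 1)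
    (hsum : ∑ f, v f ≤ 1) (S : Finset F) :
    vanishingIndicator S v = 1 - ∑ f ∈ S, v f := by
  have hv0 : ∀ f, 0 ≤ v f := fun f => (h01 f).elim (·.ge) fun h => h ▸ zero_le_one
  unfold vanishingIndicator
  split_ifs with h
  · rw [sum_eq_zero h, sub_zero]
  · push Not at h
    obtain ⟨f, hf, hne⟩ := h
    have hle : v f ≤ ∑ f ∈ S, v f := single_le_sum (fun g _ => hv0 g) hf
    have hS : ∑ f ∈ S, v f ≤ ∑ f, v f := sum_le_univ_sum_of_nonneg hv0
    linarith [(h01 f).resolve_left hne]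

lemma integral_vanishingIndicator {Ω : Type*} {mΩ : MeasurableSpace Ω} {μ : Measure Ω}
    [IsProbabilityMeasure μ] {V : Ω → F → ℝ} (hint : ∀ f, Integrable (fun ω => V ω f) μ)
    (h01 : ∀ ω f, V ω f = 0 ∨ V ω f = 1) (hsum : ∀ᵐ ω ∂μ, ∑ f, V ω f ≤ 1) (S : Finset F) :
    ∫ ω, vanishingIndicator S (V ω) ∂μ = 1 - ∑ f ∈ S, ∫ ω, V ω f ∂μ := by
  rw [integral_congr_ae (hsum.mono fun ω h => vanishingIndicator_eq_one_sub_sum (h01 ω) h S),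
    integral_sub (integrable_const 1) (integrable_finsetSum _ fun f _ => hint f),
    integral_finsetSum _ fun f _ => hint f, integral_const, probReal_univ, one_smul]

end VanishingIndicator

namespace ProbabilityTheory

variable {Ω ι : Type*} [Fintype ι] {mΩ : MeasurableSpace Ω} {μ : Measure Ω}
  {𝓧 : ι → Type*} {m𝓧 : ∀ i, MeasurableSpace (𝓧 i)} {X : (i : ι) → Ω → 𝓧 i}
  {φ : (i : ι) → 𝓧 i → ℝ}

lemma iIndepFun.integral_finset_prod_comp (hX : iIndepFun X μ) (mX : ∀ i, Measurable (X i))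
    (hφ : ∀ i, Measurable (φ i)) (s : Finset ι) :
    ∫ ω, ∏ i ∈ s, φ i (X i ω) ∂μ = ∏ i ∈ s, ∫ ω, φ i (X i ω) ∂μ := by
  classical
  have := hX.isProbabilityMeasure
  have h := hX.integral_fun_prod_comp (f := fun i v => if i ∈ s then φ i v else 1)
    (fun i => (mX i).aemeasurable) fun i => by
      by_cases hi : i ∈ s <;> simp [hi, (hφ i).aestronglyMeasurable, aestronglyMeasurable_const]
  have hint : ∀ i, ∫ ω, (if i ∈ s then φ i (X i ω) else 1) ∂μ =
      if i ∈ s then ∫ ω, φ i (X i ω) ∂μ else 1 := fun i => by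
    split_ifs <;> simp
  simpa only [hint, Fintype.prod_ite_mem] using h

lemma iIndepFun.integral_comp_mul_finset_prod_comp [DecidableEq ι] (hX : iIndepFun X μ)
    (mX : ∀ i, Measurable (X i)) (hφ : ∀ i, Measurable (φ i)) {s : Finset ι} {j : ι}
    (hj : j ∉ s) {ψ : 𝓧 j → ℝ} (hψ : Measurable ψ) :
    ∫ ω, ψ (X j ω) * ∏ i ∈ s, φ i (X i ω) ∂μ =
      (∫ ω, ψ (X j ω) ∂μ) * ∏ i ∈ s, ∫ ω, φ i (X i ω) ∂μ := by
  have hupd : ∀ i ∈ s, ∀ v, Function.update φ j ψ i v = φ i v := fun i hi v => by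
    rw [Function.update_of_ne (ne_of_mem_of_not_mem hi hj)]
  have hprod : ∀ ω, ∏ i ∈ s, Function.update φ j ψ i (X i ω) = ∏ i ∈ s, φ i (X i ω) :=
    fun ω => prod_congr rfl fun i hi => hupd i hi _
  have hprod_integral : ∏ i ∈ s, ∫ ω, Function.update φ j ψ i (X i ω) ∂μ =
      ∏ i ∈ s, ∫ ω, φ i (X i ω) ∂μ :=
    prod_congr rfl fun i hi => by simp only [hupd i hi]
  have h := hX.integral_finset_prod_comp mX (φ := Function.update φ j ψ) (fun i => by
    rcases eq_or_ne i j with rfl | hi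
    · simpa using hψ
    · simpa [hi] using hφ i) (insert j s)
  simpa only [prod_insert hj, Function.update_self, hprod, hprod_integral] using h

end ProbabilityTheory

section RoundProcess

variable {Ω κ F : Type*} {mΩ : MeasurableSpace Ω} {μ : Measure Ω} {V : κ → Ω → F → ℝ}

lemma integrable_mul_prod_vanishingIndicator [IsFiniteMeasure μ]
    (hV01 : ∀ k ω f, V k ω f = 0 ∨ V k ω f = 1) (hVmeas : ∀ k, Measurable (V k))
    (j : κ) (f : F) (A : Finset κ) (S : Finset F) :
    Integrable (fun ω => V j ω f * ∏ k ∈ A, vanishingIndicator S (V k ω)) μ := by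
  refine integrable_of_zero_or_one ((measurable_pi_apply f).comp (hVmeas j) |>.mul <|
    Finset.measurable_prod _ fun k _ => (measurable_vanishingIndicator S).comp (hVmeas k))
    fun ω => ?_
  have hprod : ∏ k ∈ A, vanishingIndicator S (V k ω) = 0 ∨
      ∏ k ∈ A, vanishingIndicator S (V k ω) = 1 :=
    prod_induction _ (fun x : ℝ => x = 0 ∨ x = 1)
      (fun a b ha hb => by rcases ha with rfl | rfl <;> rcases hb with rfl | rfl <;> simp)
      (by simp) fun k _ => vanishingIndicator_eq_zero_or_one S _
  rcases hV01 j ω f with h | h <;> rcases hprod with h' | h' <;> simp [h, h']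

lemma integral_prod_vanishingIndicator [Fintype κ] [Fintype F]
    (hV01 : ∀ k ω f, V k ω f = 0 ∨ V k ω f = 1) (hVmeas : ∀ k, Measurable (V k))
    (hindep : iIndepFun V μ) (honce : ∀ᵐ ω ∂μ, ∀ k, ∑ f, V k ω f ≤ 1)
    (A : Finset κ) (S : Finset F) :
    ∫ ω, ∏ k ∈ A, vanishingIndicator S (V k ω) ∂μ =
      ∏ k ∈ A, (1 - ∑ f ∈ S, ∫ ω, V k ω f ∂μ) := by
  have := hindep.isProbabilityMeasure
  rw [hindep.integral_finset_prod_comp hVmeas fun _ => measurable_vanishingIndicator S]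
  refine prod_congr rfl fun k _ => integral_vanishingIndicator
    (fun f => integrable_of_zero_or_one ((measurable_pi_apply f).comp (hVmeas k)) (hV01 k · f))
    (hV01 k) (honce.mono fun ω h => h k) S

lemma integral_mul_prod_vanishingIndicator [Fintype κ] (hVmeas : ∀ k, Measurable (V k))
    (hindep : iIndepFun V μ) {A : Finset κ} {j : κ} (hj : j ∉ A) (f : F) (S : Finset F) :
    ∫ ω, V j ω f * ∏ k ∈ A, vanishingIndicator S (V k ω) ∂μ =
      (∫ ω, V j ω f ∂μ) * ∫ ω, ∏ k ∈ A, vanishingIndicator S (V k ω) ∂μ := by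
  classical
  rw [hindep.integral_finset_prod_comp hVmeas fun _ => measurable_vanishingIndicator S]
  exact hindep.integral_comp_mul_finset_prod_comp hVmeas
    (fun _ => measurable_vanishingIndicator S) hj (measurable_pi_apply f)

end RoundProcess

open scoped Classical in
theorem stmt_10_general {Ω : Type*} [MeasureSpace Ω] [IsProbabilityMeasure (ℙ : Measure Ω)]
    {F I : Type*} [Fintype F] [DecidableEq I]
    (ι : F → I) (T : ℕ)
    (W : Fin T → F → Ω → ℝ)
    (hW01 : ∀ t f ω, W t f ω = 0 ∨ W t f ω = 1)
    (hWmeas : ∀ t f, Measurable (W t f))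
    (hindep : iIndepFun
      (fun t ω => fun f => W t f ω) ℙ)
    (honce : ∀ᵐ ω ∂ℙ, ∀ t, ∑ f, W t f ω ≤ 1)
    (γ : ℝ) (hγ : γ ∈ Set.Icc (0 : ℝ) 1)
    (x p : F → Fin T → ℝ)
    (hx : ∀ f t, x f t ∈ Set.Icc (0 : ℝ) 1) (hp : ∀ f t, p f t ∈ Set.Icc (0 : ℝ) 1)
    (hcap : ∀ i, ∑ t, ∑ f ∈ univ.filter (fun f => ι f = i), x f t * p f t ≤ 1)
    (hmarg : ∀ t f, ℙ {ω | W t f ω = 1} = ENNReal.ofReal (γ * x f t * p f t))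
    (SF : I → Fin T → Ω → ℝ)
    (hSF : ∀ i t ω, SF i t ω =
      if ∀ s < t, ∀ f, ι f = i → W s f ω = 0 then 1 else 0)
    (χ : F → Fin T → Ω → ℝ)
    (hχ : ∀ f t ω, χ f t ω = W t f ω * SF (ι f) t ω) :
    (∀ i t, (∫ ω, SF i t ω) =
        ∏ s ∈ Finset.Iio t,
          (1 - γ * ∑ f ∈ univ.filter (fun f => ι f = i), x f s * p f s) ∧
      1 - γ ≤ ∫ ω, SF i t ω) ∧
    (∀ f t, (1 - γ) * (γ * x f t * p f t) ≤ ∫ ω, χ f t ω) ∧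
    (∀ w : F → Fin T → ℝ, (∀ f t, 0 ≤ w f t) →
      γ * (1 - γ) * ∑ t, ∑ f, w f t * x f t * p f t ≤
        ∫ ω, ∑ t, ∑ f, w f t * χ f t ω) := by
  set V : Fin T → Ω → F → ℝ := fun t ω f => W t f ω
  have hV01 : ∀ t ω f, V t ω f = 0 ∨ V t ω f = 1 := fun t ω f => hW01 t f ω
  have hVmeas : ∀ t, Measurable (V t) := fun t => measurable_pi_lambda _ (hWmeas t)
  have hxp : ∀ f t, 0 ≤ x f t * p f t := fun f t => mul_nonneg (hx f t).1 (hp f t).1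
  have hγxp : ∀ f t, 0 ≤ γ * x f t * p f t := fun f t => by
    rw [mul_assoc]; exact mul_nonneg hγ.1 (hxp f t)
  have hEW : ∀ t f, ∫ ω, V t ω f = γ * x f t * p f t := fun t f => by
    rw [integral_of_zero_or_one (hWmeas t f) (hW01 t f), measureReal_def, hmarg,
      ENNReal.toReal_ofReal (hγxp f t)]
  have hSF_prod : ∀ i t, SF i t =
      fun ω => ∏ s ∈ Iio t, vanishingIndicator (univ.filter (ι · = i)) (V s ω) :=
    fun i t => funext fun ω => by
      simp only [hSF, V, vanishingIndicator, prod_ite_zero, prod_const_one, mem_Iio,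
        mem_filter, mem_univ, true_and]
  have hESF : ∀ i t, ∫ ω, SF i t ω =
      ∏ s ∈ Iio t, (1 - γ * ∑ f ∈ univ.filter (ι · = i), x f s * p f s) := fun i t => by
    simp only [hSF_prod, integral_prod_vanishingIndicator hV01 hVmeas hindep honce, hEW,
      mul_assoc, mul_sum]
  have hSF_lb : ∀ i t, 1 - γ ≤ ∫ ω, SF i t ω := fun i t =>
    hESF i t ▸ one_sub_le_prod_one_sub_mul _ hγ (fun s _ => sum_nonneg fun f _ => hxp f s)
      ((sum_le_univ_sum_of_nonneg fun s => sum_nonneg fun f _ => hxp f s).trans (hcap i))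
  have hχ_prod : ∀ f t, χ f t = fun ω => V t ω f * SF (ι f) t ω := fun f t => funext (hχ f t)
  have hχ_lb : ∀ f t, (1 - γ) * (γ * x f t * p f t) ≤ ∫ ω, χ f t ω := fun f t => by
    rw [hχ_prod, hSF_prod, integral_mul_prod_vanishingIndicator hVmeas hindep (by simp),
      ← hSF_prod, hEW, mul_comm]
    exact mul_le_mul_of_nonneg_left (hSF_lb (ι f) t) (hγxp f t)
  refine ⟨fun i t => ⟨hESF i t, hSF_lb i t⟩, hχ_lb, fun w hw => ?_⟩
  calc γ * (1 - γ) * ∑ t, ∑ f, w f t * x f t * p f t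
      = ∑ t, ∑ f, w f t * ((1 - γ) * (γ * x f t * p f t)) := by
        simp only [mul_sum]; ring_nf
    _ ≤ ∫ ω, ∑ t, ∑ f, w f t * χ f t ω :=
        sum_sum_mul_le_integral _ _ (fun t f => hw f t) (fun t f => by
          rw [hχ_prod, hSF_prod]
          exact integrable_mul_prod_vanishingIndicator hV01 hVmeas t f _ _)
          fun t f => hχ_lb f t

open scoped Classical in
/-- competitive analysis of `SAMP(γ)`: in the round-process
model with `SAMP(γ)` marginals `P(W t f = 1) = γ x f t p f t`, `γ ∈ [0,1]`,
the safety indicators satisfy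
`E[SF i t] = ∏_{s<t} (1 - γ ∑_{f:ι f=i} x f s p f s) ≥ 1 - γ`, and the success
indicators `χ f t = W t f · SF (ι f) t` satisfy
`E[χ f t] ≥ (1-γ)·γ·x f t·p f t`.  Consequently, for any nonnegative profits
`w`, the expected total profit satisfies
`E[∑_t ∑_f w f t χ f t] ≥ γ(1-γ)·∑_{t,f} w f t x f t p f t`; in particular
`SAMP(γ)` attains a `γ(1-γ)` fraction of the LP objective value, hence a
competitive ratio of at least `γ(1-γ)` for MP-KHD. -/
theorem stmt_10 {Ω : Type*} [MeasureSpace Ω] [IsProbabilityMeasure (ℙ : Measure Ω)]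
    {F I : Type*} [Fintype F] [Fintype I] [DecidableEq I]
    (ι : F → I) (T : ℕ)
    (W : Fin T → F → Ω → ℝ)
    (hW01 : ∀ t f ω, W t f ω = 0 ∨ W t f ω = 1)
    (hWmeas : ∀ t f, Measurable (W t f))
    (hindep : iIndepFun
      (fun t ω => fun f => W t f ω) ℙ)
    (honce : ∀ᵐ ω ∂ℙ, ∀ t, ∑ f, W t f ω ≤ 1)
    (γ : ℝ) (hγ : γ ∈ Set.Icc (0 : ℝ) 1)
    (x p : F → Fin T → ℝ)
    (hx : ∀ f t, x f t ∈ Set.Icc (0 : ℝ) 1) (hp : ∀ f t, p f t ∈ Set.Icc (0 : ℝ) 1)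
    (hcap : ∀ i, ∑ t, ∑ f ∈ univ.filter (fun f => ι f = i), x f t * p f t ≤ 1)
    (hmarg : ∀ t f, ℙ {ω | W t f ω = 1} = ENNReal.ofReal (γ * x f t * p f t))
    (SF : I → Fin T → Ω → ℝ)
    (hSF : ∀ i t ω, SF i t ω =
      if ∀ s < t, ∀ f, ι f = i → W s f ω = 0 then 1 else 0)
    (χ : F → Fin T → Ω → ℝ)
    (hχ : ∀ f t ω, χ f t ω = W t f ω * SF (ι f) t ω) :
    (∀ i t, (∫ ω, SF i t ω) =
        ∏ s ∈ Finset.Iio t,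
          (1 - γ * ∑ f ∈ univ.filter (fun f => ι f = i), x f s * p f s) ∧
      1 - γ ≤ ∫ ω, SF i t ω) ∧
    (∀ f t, (1 - γ) * (γ * x f t * p f t) ≤ ∫ ω, χ f t ω) ∧
    (∀ w : F → Fin T → ℝ, (∀ f t, 0 ≤ w f t) →
      γ * (1 - γ) * ∑ t, ∑ f, w f t * x f t * p f t ≤
        ∫ ω, ∑ t, ∑ f, w f t * χ f t ω) :=
  stmt_10_general ι T W hW01 hWmeas hindep honce γ hγ x p hx hp hcap hmarg SF hSF χ hχ
end

section
/- For every γ ∈ [0,1], lim_{ε→0⁺} [γ(1−ε) + γ(1 − γ(1−ε))/ε] / [1/ε + 1 − ε] = γ(1−γ). Here the numerator is the expected profit of SAMP(γ) on the Figure-3 instance with parameter ε, and the denominator 1/ε + 1 − ε is both the clairvoyant optimal and the optimal LP value of that instance; hence the competitive ratio of SAMP(γ) tends to exactly γ(1−γ) as ε → 0⁺, showing the competitive analysis of SAMP(γ) is tight for every γ ∈ [0,1], unconditionally of the benchmark LP. -/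
open Set Filter

/-- for every `γ ∈ [0,1]`,
`lim_{ε→0⁺} [γ(1-ε) + γ(1-γ(1-ε))/ε] / [1/ε + 1 - ε] = γ(1-γ)`.
The numerator is the expected profit of `SAMP(γ)` on the Figure-3 instance with
parameter `ε`, and the denominator `1/ε + 1 - ε` is both the clairvoyant
optimum and the optimal LP value of that instance; hence the competitive ratio
of `SAMP(γ)` tends to exactly `γ(1-γ)` as `ε → 0⁺`, showing the competitive
analysis of `SAMP(γ)` is tight for every `γ ∈ [0,1]`, unconditionally of the
benchmark LP. -/
theorem stmt_11 (γ : ℝ) (hγ : γ ∈ Icc (0 : ℝ) 1) :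
    Tendsto
      (fun ε : ℝ =>
        (γ * (1 - ε) + γ * (1 - γ * (1 - ε)) / ε) / (1 / ε + 1 - ε))
      (nhdsWithin 0 (Ioi 0)) (nhds (γ * (1 - γ))) := by
  have hg : Tendsto
      (fun ε : ℝ => (γ * (1 - ε) * ε + γ * (1 - γ * (1 - ε))) / (1 + ε - ε ^ 2))
      (nhdsWithin 0 (Ioi 0)) (nhds (γ * (1 - γ))) := by
    have hca : ContinuousAt
        (fun ε : ℝ => (γ * (1 - ε) * ε + γ * (1 - γ * (1 - ε))) / (1 + ε - ε ^ 2)) 0 := by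
      apply ContinuousAt.div (by fun_prop) (by fun_prop)
      norm_num
    have := hca.tendsto.mono_left (nhdsWithin_le_nhds (s := Ioi (0:ℝ)))
    simpa using this
  refine hg.congr' ?_
  filter_upwards [self_mem_nhdsWithin] with ε (hε : 0 < ε)
  have hne : ε ≠ 0 := ne_of_gt hε
  field_simp
end
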